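/- Let C ⊂ ℝ² be a compact convex set with nonempty interior, O an interior point, and φ* a local minimizer of the chord-length function f̃(φ) = |l(φ) ∩ C| with chord [A*B*]. Then for any supporting lines l₁ of C at A* and l₂ of C at B*, the perpendicular to l₁ at A*, the perpendicular to l₂ at B*, and the perpendicular to line A*B* at O are concurrent. -/

import Mathlib

open Real RealInnerProductSpace

/-- Unit direction vector in the plane at angle `φ`. -/
noncomputable def lineDir (φ : ℝ) : EuclideanSpace ℝ (Fin 2) :=
  (WithLp.equiv 2 (Fin 2 → ℝ)).symm ![Real.cos φ, Real.sin φ]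

/-- `v` is a normal vector of a supporting line of `C` at `P`. -/
def IsSupportVec (C : Set (EuclideanSpace ℝ (Fin 2)))
    (P v : EuclideanSpace ℝ (Fin 2)) : Prop :=
  v ≠ 0 ∧ ∀ x ∈ C, ⟪x - P, v⟫ ≤ 0

lemma lineDir_zero (φ : ℝ) : lineDir φ 0 = Real.cos φ := by simp [lineDir]
lemma lineDir_one (φ : ℝ) : lineDir φ 1 = Real.sin φ := by simp [lineDir]
lemma inner_expand (x y : EuclideanSpace ℝ (Fin 2)) : ⟪x, y⟫ = x 0 * y 0 + x 1 * y 1 := by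
  simp [PiLp.inner_apply, Fin.sum_univ_two, RCLike.inner_apply]; ring
lemma norm_lineDir (φ : ℝ) : ‖lineDir φ‖ = 1 := by
  rw [EuclideanSpace.norm_eq]; simp [lineDir, Fin.sum_univ_two]
lemma coord_eq (O z : EuclideanSpace ℝ (Fin 2)) (φ t : ℝ) (h : z = O + t • lineDir φ) :
    ⟪z - O, lineDir φ⟫ = t := by
  subst h
  rw [add_sub_cancel_left, real_inner_smul_left, real_inner_self_eq_norm_sq, norm_lineDir]; ring
lemma dist_coord (O x y : EuclideanSpace ℝ (Fin 2)) (φ t u : ℝ)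
    (hx : x = O + t • lineDir φ) (hy : y = O + u • lineDir φ) :
    dist x y = |t - u| := by
  subst hx hy
  rw [dist_eq_norm, add_sub_add_left_eq_sub, ← sub_smul, norm_smul, norm_lineDir,
    mul_one, Real.norm_eq_abs]
lemma strict_support (C : Set (EuclideanSpace ℝ (Fin 2))) (O : EuclideanSpace ℝ (Fin 2))
    (hO : O ∈ interior C) (Q v : EuclideanSpace ℝ (Fin 2)) (hv : IsSupportVec C Q v) :
    ⟪O - Q, v⟫ < 0 := by
  obtain ⟨ε, hε, hball⟩ := Metric.mem_nhds_iff.mp (mem_interior_iff_mem_nhds.mp hO)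
  have hnv : 0 < ‖v‖ := norm_pos_iff.mpr hv.1
  set x : EuclideanSpace ℝ (Fin 2) := O + (ε / (2 * ‖v‖)) • v with hx
  have hxC : x ∈ C := by
    apply hball
    rw [Metric.mem_ball, hx, dist_eq_norm, add_sub_cancel_left, norm_smul, Real.norm_eq_abs,
      abs_of_pos (by positivity)]
    have : ε / (2 * ‖v‖) * ‖v‖ = ε / 2 := by field_simp
    rw [this]; linarith
  have h := hv.2 x hxC
  have hexp : ⟪x - Q, v⟫ = ⟪O - Q, v⟫ + (ε / (2 * ‖v‖)) * ‖v‖ ^ 2 := by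
    rw [hx, add_comm O, add_sub_assoc, inner_add_left, real_inner_smul_left,
      real_inner_self_eq_norm_sq]
    ring
  have hpos : 0 < ε / (2 * ‖v‖) * ‖v‖ ^ 2 := by positivity
  linarith

set_option maxHeartbeats 1000000 in
lemma aux (C : Set (EuclideanSpace ℝ (Fin 2)))
    (O : EuclideanSpace ℝ (Fin 2)) (hO : O ∈ interior C)
    (A B : ℝ → EuclideanSpace ℝ (Fin 2))
    (hchord : ∀ φ : ℝ,
      {x | ∃ t : ℝ, x = O + t • lineDir φ} ∩ C = segment ℝ (A φ) (B φ))
    (f : ℝ → ℝ) (hf : ∀ φ, f φ = dist (A φ) (B φ))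
    (φs : ℝ) (hmin : IsLocalMin f φs)
    (v₁ v₂ : EuclideanSpace ℝ (Fin 2))
    (hv₁ : IsSupportVec C (A φs) v₁) (hv₂ : IsSupportVec C (B φs) v₂)
    (a b : ℝ) (hA : A φs = O + a • lineDir φs) (hB : B φs = O + b • lineDir φs)
    (ha : a < 0) (hb : 0 < b) :
    ∃ (P : EuclideanSpace ℝ (Fin 2)) (t s : ℝ),
      P = A φs + t • v₁ ∧ P = B φs + s • v₂ ∧ ⟪P - O, B φs - A φs⟫ = 0 := by
  set p₁ := v₁ 0 with hp₁; set q₁ := v₁ 1 with hq₁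
  set p₂ := v₂ 0 with hp₂; set q₂ := v₂ 1 with hq₂
  set c := Real.cos φs with hc; set sn := Real.sin φs with hsn
  set α₁ := p₁ * c + q₁ * sn with hα₁def
  set α₂ := p₂ * c + q₂ * sn with hα₂def
  set β₁ := p₁ * (-sn) + q₁ * c with hβ₁def
  set β₂ := p₂ * (-sn) + q₂ * c with hβ₂def
  have pyth : sn ^ 2 + c ^ 2 = 1 := Real.sin_sq_add_cos_sq φs
  -- inner products with the direction
  have hinner₁ : ⟪lineDir φs, v₁⟫ = α₁ := by
    rw [inner_expand, lineDir_zero, lineDir_one]; ring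
  have hinner₂ : ⟪lineDir φs, v₂⟫ = α₂ := by
    rw [inner_expand, lineDir_zero, lineDir_one]; ring
  -- strict support gives signs of α₁, α₂
  have hs₁ := strict_support C O hO (A φs) v₁ hv₁
  have hs₂ := strict_support C O hO (B φs) v₂ hv₂
  rw [hA] at hs₁
  rw [hB] at hs₂
  have e₁ : (O - (O + a • lineDir φs) : EuclideanSpace ℝ (Fin 2)) = (-a) • lineDir φs := by
    module
  have e₂ : (O - (O + b • lineDir φs) : EuclideanSpace ℝ (Fin 2)) = (-b) • lineDir φs := by
    module
  rw [e₁, real_inner_smul_left, hinner₁] at hs₁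
  rw [e₂, real_inner_smul_left, hinner₂] at hs₂
  have hα₁ : α₁ < 0 := by nlinarith
  have hα₂ : 0 < α₂ := by nlinarith
  -- scalar support inequalities for any point of C on line φ
  have hsup₁ : ∀ φ t (x : EuclideanSpace ℝ (Fin 2)), x ∈ C → x = O + t • lineDir φ →
      t * (p₁ * Real.cos φ + q₁ * Real.sin φ) ≤ a * α₁ := by
    intro φ t x hxC hxeq
    have h := hv₁.2 x hxC
    rw [hxeq, hA] at h
    rw [show (O + t • lineDir φ - (O + a • lineDir φs) : EuclideanSpace ℝ (Fin 2))
        = t • lineDir φ - a • lineDir φs by module,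
      inner_sub_left, real_inner_smul_left, real_inner_smul_left, hinner₁,
      inner_expand, lineDir_zero, lineDir_one] at h
    nlinarith [h]
  clear hs₁ hs₂ e₁ e₂
  have hsup₂ : ∀ φ t (x : EuclideanSpace ℝ (Fin 2)), x ∈ C → x = O + t • lineDir φ →
      t * (p₂ * Real.cos φ + q₂ * Real.sin φ) ≤ b * α₂ := by
    intro φ t x hxC hxeq
    have h := hv₂.2 x hxC
    rw [hxeq, hB] at h
    rw [show (O + t • lineDir φ - (O + b • lineDir φs) : EuclideanSpace ℝ (Fin 2))
        = t • lineDir φ - b • lineDir φs by module,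
      inner_sub_left, real_inner_smul_left, real_inner_smul_left, hinner₂,
      inner_expand, lineDir_zero, lineDir_one] at h
    nlinarith [h]
  -- endpoints of the chord lie on the line and in C
  have hend : ∀ φ, ∃ tA tB : ℝ, A φ = O + tA • lineDir φ ∧ B φ = O + tB • lineDir φ ∧
      A φ ∈ C ∧ B φ ∈ C := by
    intro φ
    have hAm : A φ ∈ {x | ∃ t : ℝ, x = O + t • lineDir φ} ∩ C := by
      rw [hchord φ]; exact left_mem_segment ℝ _ _
    have hBm : B φ ∈ {x | ∃ t : ℝ, x = O + t • lineDir φ} ∩ C := by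
      rw [hchord φ]; exact right_mem_segment ℝ _ _
    obtain ⟨tA, htA⟩ := hAm.1
    obtain ⟨tB, htB⟩ := hBm.1
    exact ⟨tA, tB, htA, htB, hAm.2, hBm.2⟩
  -- the comparison function
  set g : ℝ → ℝ := fun φ => b * α₂ / (p₂ * Real.cos φ + q₂ * Real.sin φ)
      - a * α₁ / (p₁ * Real.cos φ + q₁ * Real.sin φ) with hgdef
  have hc₁cont : Continuous (fun φ => p₁ * Real.cos φ + q₁ * Real.sin φ) := by continuity
  have hc₂cont : Continuous (fun φ => p₂ * Real.cos φ + q₂ * Real.sin φ) := by continuity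
  have ev₁ : ∀ᶠ φ in nhds φs, p₁ * Real.cos φ + q₁ * Real.sin φ < 0 :=
    hc₁cont.continuousAt.eventually_lt continuousAt_const hα₁
  have ev₂ : ∀ᶠ φ in nhds φs, 0 < p₂ * Real.cos φ + q₂ * Real.sin φ :=
    continuousAt_const.eventually_lt hc₂cont.continuousAt hα₂
  -- f ≤ g eventually
  have evfg : ∀ᶠ φ in nhds φs, f φ ≤ g φ := by
    filter_upwards [ev₁, ev₂] with φ h₁ h₂
    obtain ⟨tA, tB, htA, htB, hAC, hBC⟩ := hend φ
    have bA₁ := hsup₁ φ tA (A φ) hAC htA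
    have bA₂ := hsup₂ φ tA (A φ) hAC htA
    have bB₁ := hsup₁ φ tB (B φ) hBC htB
    have bB₂ := hsup₂ φ tB (B φ) hBC htB
    -- lower and upper bounds
    set c₁ := p₁ * Real.cos φ + q₁ * Real.sin φ
    set c₂ := p₂ * Real.cos φ + q₂ * Real.sin φ
    have LA : a * α₁ / c₁ ≤ tA := by rw [div_le_iff_of_neg h₁]; linarith
    have LB : a * α₁ / c₁ ≤ tB := by rw [div_le_iff_of_neg h₁]; linarith
    have UA : tA ≤ b * α₂ / c₂ := by rw [le_div_iff₀ h₂]; linarith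
    have UB : tB ≤ b * α₂ / c₂ := by rw [le_div_iff₀ h₂]; linarith
    rw [hf φ, dist_coord O (A φ) (B φ) φ tA tB htA htB, hgdef]
    rw [abs_sub_le_iff]
    constructor <;> linarith
  -- g has a local min at φs
  have hgφs : g φs = b - a := by
    rw [hgdef]
    simp only [← hc, ← hsn, ← hα₁def, ← hα₂def]
    rw [mul_div_assoc, mul_div_assoc, div_self (ne_of_lt hα₁), div_self (ne_of_gt hα₂)]
    ring
  have hfφs : f φs = b - a := by
    rw [hf φs, dist_coord O (A φs) (B φs) φs a b hA hB, abs_of_neg (by linarith : a - b < 0)]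
    ring
  have gmin : IsLocalMin g φs := by
    filter_upwards [hmin, evfg] with φ h1 h2
    rw [hgφs, ← hfφs]
    exact le_trans h1 h2
  -- derivative of g at φs
  have hd₁ : HasDerivAt (fun φ => p₁ * Real.cos φ + q₁ * Real.sin φ) β₁ φs := by
    rw [hβ₁def]
    exact ((Real.hasDerivAt_cos φs).const_mul p₁).add ((Real.hasDerivAt_sin φs).const_mul q₁)
  have hd₂ : HasDerivAt (fun φ => p₂ * Real.cos φ + q₂ * Real.sin φ) β₂ φs := by
    rw [hβ₂def]
    exact ((Real.hasDerivAt_cos φs).const_mul p₂).add ((Real.hasDerivAt_sin φs).const_mul q₂)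
  have hα₁' : p₁ * Real.cos φs + q₁ * Real.sin φs ≠ 0 := by
    rw [← hc, ← hsn, ← hα₁def]; exact ne_of_lt hα₁
  have hα₂' : p₂ * Real.cos φs + q₂ * Real.sin φs ≠ 0 := by
    rw [← hc, ← hsn, ← hα₂def]; exact ne_of_gt hα₂
  have hg₂ : HasDerivAt (fun φ => b * α₂ / (p₂ * Real.cos φ + q₂ * Real.sin φ))
      ((0 * (p₂ * Real.cos φs + q₂ * Real.sin φs) - b * α₂ * β₂)
        / (p₂ * Real.cos φs + q₂ * Real.sin φs) ^ 2) φs :=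
    (hasDerivAt_const φs (b * α₂)).div hd₂ hα₂'
  have hg₁ : HasDerivAt (fun φ => a * α₁ / (p₁ * Real.cos φ + q₁ * Real.sin φ))
      ((0 * (p₁ * Real.cos φs + q₁ * Real.sin φs) - a * α₁ * β₁)
        / (p₁ * Real.cos φs + q₁ * Real.sin φs) ^ 2) φs :=
    (hasDerivAt_const φs (a * α₁)).div hd₁ hα₁'
  have hgd : HasDerivAt g _ φs := hg₂.sub hg₁
  have E := gmin.hasDerivAt_eq_zero hgd
  rw [← hc, ← hsn, ← hα₁def, ← hα₂def] at E
  have hkey : a * β₁ * α₂ = b * β₂ * α₁ := by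
    field_simp at E
    have h3 : α₂ * (0 - a * β₁) / α₁ * α₁ = α₂ * (0 - a * β₁) := div_mul_cancel₀ _ (ne_of_lt hα₁)
    linear_combination α₁ * E + h3
  -- construct the intersection point
  have hne₁ : α₁ ≠ 0 := ne_of_lt hα₁
  have hne₂ : α₂ ≠ 0 := ne_of_gt hα₂
  have key0 : a * c + (-a / α₁) * p₁ = b * c + (-b / α₂) * p₂ := by
    field_simp
    linear_combination sn * hkey + a * α₂ * (c * hα₁def - sn * hβ₁def + p₁ * pyth)
      - b * α₁ * (c * hα₂def - sn * hβ₂def + p₂ * pyth)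
  have key1 : a * sn + (-a / α₁) * q₁ = b * sn + (-b / α₂) * q₂ := by
    field_simp
    linear_combination (-c) * hkey + a * α₂ * (sn * hα₁def + c * hβ₁def + q₁ * pyth)
      - b * α₁ * (sn * hα₂def + c * hβ₂def + q₂ * pyth)
  refine ⟨A φs + (-a / α₁) • v₁, -a / α₁, -b / α₂, rfl, ?_, ?_⟩
  · rw [hA, hB]
    refine PiLp.ext fun i => ?_
    fin_cases i <;>
      simp only [Fin.mk_zero, Fin.mk_one, PiLp.add_apply, PiLp.smul_apply, lineDir_zero,
        lineDir_one, smul_eq_mul, ← hp₁, ← hq₁, ← hp₂, ← hq₂, ← hc, ← hsn]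
    · linarith [key0]
    · linarith [key1]
  · rw [hA, hB, inner_expand]
    simp only [PiLp.add_apply, PiLp.sub_apply, PiLp.smul_apply, lineDir_zero, lineDir_one,
      smul_eq_mul, ← hp₁, ← hq₁, ← hc, ← hsn]
    field_simp
    linear_combination (b - a) * a * α₁ * pyth + (b - a) * a * hα₁def


/-- Let `C ⊆ ℝ²` be compact convex with nonempty interior, `O` an interior point,
and `φ*` a local minimizer of the chord-length function `f φ = |l(φ) ∩ C|`, with
chord `[A*, B*] = [A φ*, B φ*]`.  Then for any supporting lines `l₁` of `C` at `A*`
(with normal `v₁`) and `l₂` at `B*` (with normal `v₂`), the perpendicular to `l₁`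
at `A*`, the perpendicular to `l₂` at `B*`, and the perpendicular to the line
`A*B*` at `O` are concurrent. -/
theorem statement9 (C : Set (EuclideanSpace ℝ (Fin 2)))
    (hC : IsCompact C) (hconv : Convex ℝ C) (hint : (interior C).Nonempty)
    (O : EuclideanSpace ℝ (Fin 2)) (hO : O ∈ interior C)
    (A B : ℝ → EuclideanSpace ℝ (Fin 2))
    (hchord : ∀ φ : ℝ,
      {x | ∃ t : ℝ, x = O + t • lineDir φ} ∩ C = segment ℝ (A φ) (B φ))
    (f : ℝ → ℝ) (hf : ∀ φ, f φ = dist (A φ) (B φ))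
    (φs : ℝ) (hmin : IsLocalMin f φs)
    (v₁ v₂ : EuclideanSpace ℝ (Fin 2))
    (hv₁ : IsSupportVec C (A φs) v₁) (hv₂ : IsSupportVec C (B φs) v₂) :
    ∃ (P : EuclideanSpace ℝ (Fin 2)) (t s : ℝ),
      P = A φs + t • v₁ ∧ P = B φs + s • v₂ ∧ ⟪P - O, B φs - A φs⟫ = 0 := by
  -- endpoints on the line
  have hAm : A φs ∈ {x | ∃ t : ℝ, x = O + t • lineDir φs} ∩ C := by
    rw [hchord φs]; exact left_mem_segment ℝ _ _
  have hBm : B φs ∈ {x | ∃ t : ℝ, x = O + t • lineDir φs} ∩ C := by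
    rw [hchord φs]; exact right_mem_segment ℝ _ _
  obtain ⟨a, hA⟩ := hAm.1
  obtain ⟨b, hB⟩ := hBm.1
  -- two interior points on the line, on both sides of O
  obtain ⟨ε, hε, hball⟩ := Metric.mem_nhds_iff.mp (mem_interior_iff_mem_nhds.mp hO)
  have hmem : ∀ r : ℝ, |r| < ε → (O + r • lineDir φs) ∈ segment ℝ (A φs) (B φs) := by
    intro r hr
    rw [← hchord φs]
    refine ⟨⟨r, rfl⟩, hball ?_⟩
    rw [Metric.mem_ball, dist_eq_norm, add_sub_cancel_left, norm_smul, norm_lineDir, mul_one,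
      Real.norm_eq_abs]
    exact hr
  have hcoordseg : ∀ r : ℝ, (O + r • lineDir φs) ∈ segment ℝ (A φs) (B φs) →
      ∃ u w : ℝ, 0 ≤ u ∧ 0 ≤ w ∧ u + w = 1 ∧ u * a + w * b = r := by
    rintro r ⟨u, w, hu, hw, huw, hx⟩
    refine ⟨u, w, hu, hw, huw, ?_⟩
    have hw' : w = 1 - u := by linarith
    subst hw'
    have hxx : (O + r • lineDir φs : EuclideanSpace ℝ (Fin 2))
        = O + (u * a + (1 - u) * b) • lineDir φs := by
      rw [← hx, hA, hB]; module
    have h1 := coord_eq O (O + r • lineDir φs) φs (u * a + (1 - u) * b) hxx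
    have h2 := coord_eq O (O + r • lineDir φs) φs r rfl
    linarith [h1, h2]
  have h2ε : |ε / 2| < ε := by rw [abs_of_pos (by linarith)]; linarith
  have h2ε' : |(-(ε / 2))| < ε := by rw [abs_neg, abs_of_pos (by linarith)]; linarith
  obtain ⟨u, w, hu, hw, huw, hpos⟩ := hcoordseg _ (hmem _ h2ε)
  obtain ⟨u', w', hu', hw', huw', hneg⟩ := hcoordseg _ (hmem _ h2ε')
  rcases le_total a b with hab | hab
  · have ha : a < 0 := by nlinarith [mul_nonneg hu' (sub_nonneg.mpr hab)]
    have hb : 0 < b := by nlinarith [mul_nonneg hu (sub_nonneg.mpr hab)]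
    exact aux C O hO A B hchord f hf φs hmin v₁ v₂ hv₁ hv₂ a b hA hB ha hb
  · have hb : b < 0 := by nlinarith [mul_nonneg hw' (sub_nonneg.mpr hab)]
    have ha : 0 < a := by nlinarith [mul_nonneg hw (sub_nonneg.mpr hab)]
    obtain ⟨P, t, s, h1, h2, h3⟩ :=
      aux C O hO B A (fun φ => by rw [hchord φ]; exact segment_symm ℝ _ _)
        f (fun φ => by rw [hf φ, dist_comm]) φs hmin v₂ v₁ hv₂ hv₁ b a hB hA hb ha
    refine ⟨P, s, t, h2, h1, ?_⟩
    rw [show (B φs - A φs : EuclideanSpace ℝ (Fin 2)) = -(A φs - B φs) by module,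
      inner_neg_right, h3, neg_zero]
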